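/- Let f be a network with input layer whose input vertices are 1,…,k, and let A be an attractor of S(f). Then there exist input values x_i ∈ X_i, i ≤ k, such that, taking M' ∈ X^□ with M'_i = {x_i} for i ≤ k and M'_i = X_i for i > k, and letting M be the steady state derived from the frozen core ({1,…,k}, M') (i.e., the limit of M^0 = extended forward orbit of M', M^l = F(M^{l−1})), exactly one of the following holds: M is a regular state and A = {M}; or M is a symbolic steady state and A = {a ∈ M | π^{Z_j}(a) ∈ A_j for all j ∈ {1,…,m}} for some attractors A_j of S(f^{Z_j}), where Z_1,…,Z_m are the components of G^θ(M). -/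

import Mathlib

/-! Discrete regulatory networks (Siebert), shared definitions. -/

open Finset

namespace DRN

/-- A (regular) state of a network with `n` components, component `i`
ranging over `{0, …, pᵢ}` (encoded as `Fin (pᵢ + 1)`). -/
abbrev NState {n : ℕ} (p : Fin n → ℕ) := ∀ i, Fin (p i + 1)

/-- An element of `X^□`: a tuple of finite sets of component values
(intended: discrete intervals), identified with the subset `M₁ × ⋯ × Mₙ` of `X`. -/
abbrev SymState {n : ℕ} (p : Fin n → ℕ) := ∀ i, Finset (Fin (p i + 1))

/-- `x` belongs to the subset of state space represented by `M`. -/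
def memBox {n : ℕ} {p : Fin n → ℕ} (x : NState p) (M : SymState p) : Prop :=
  ∀ i, x i ∈ M i

/-- `M ∈ X^□`: every component of `M` is a (nonempty) discrete interval. -/
def IsBox {n : ℕ} {p : Fin n → ℕ} (M : SymState p) : Prop :=
  ∀ i, ∃ a b : Fin (p i + 1), a ≤ b ∧ M i = Finset.Icc a b

/-- `M` is (identified with) a regular state: all components are singletons. -/
def IsRegular {n : ℕ} {p : Fin n → ℕ} (M : SymState p) : Prop :=
  ∀ i, (M i).card = 1

/-- The function `F : X^□ → X^□`, `F_i(M) = [min_{x∈M} f_i(x), max_{x∈M} f_i(x)]`. -/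
noncomputable def Fop {n : ℕ} {p : Fin n → ℕ} (f : NState p → NState p)
    (M : SymState p) : SymState p :=
  fun i => Finset.Icc ((Fintype.piFinset M).inf fun x => f x i)
                      ((Fintype.piFinset M).sup fun x => f x i)

/-- A symbolic steady state: an element of `X^□ \ X` with `F(M) = M`. -/
def IsSymSteady {n : ℕ} {p : Fin n → ℕ} (f : NState p → NState p)
    (M : SymState p) : Prop :=
  IsBox M ∧ ¬ IsRegular M ∧ Fop f M = M

/-- Edge of the asynchronous state transition graph `S(f)`. -/
def AsyncEdge {n : ℕ} {p : Fin n → ℕ} (f : NState p → NState p)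
    (x x' : NState p) : Prop :=
  (x' = x ∧ f x = x) ∨
  ∃ i, f x i ≠ x i ∧ (∀ j, j ≠ i → x' j = x j) ∧
    ((x i < f x i ∧ (x' i : ℕ) = (x i : ℕ) + 1) ∨
     (f x i < x i ∧ (x' i : ℕ) + 1 = (x i : ℕ)))

/-- A trap set of `S(f)`: a nonempty set that no trajectory ever leaves. -/
def IsTrapSet {n : ℕ} {p : Fin n → ℕ} (f : NState p → NState p)
    (D : Set (NState p)) : Prop :=
  D.Nonempty ∧ ∀ x ∈ D, ∀ x', AsyncEdge f x x' → x' ∈ D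

/-- An attractor of `S(f)`: a trap set any two of whose states are joined by a path. -/
def IsAttractor {n : ℕ} {p : Fin n → ℕ} (f : NState p → NState p)
    (A : Set (NState p)) : Prop :=
  IsTrapSet f A ∧ ∀ x ∈ A, ∀ y ∈ A, Relation.ReflTransGen (AsyncEdge f) x y

/-- The sequence `M̃⁰ = M`, `M̃ᵏ_j = [min(M̃ᵏ⁻¹_j ∪ F_j(M̃ᵏ⁻¹)), max(M̃ᵏ⁻¹_j ∪ F_j(M̃ᵏ⁻¹))]`
whose limit is the extended forward orbit of `M`. -/
noncomputable def efoSeq {n : ℕ} {p : Fin n → ℕ} (f : NState p → NState p)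
    (M : SymState p) : ℕ → SymState p
  | 0 => M
  | k + 1 => fun j =>
      Finset.Icc ((efoSeq f M k j ∪ Fop f (efoSeq f M k) j).inf id)
                 ((efoSeq f M k j ∪ Fop f (efoSeq f M k) j).sup id)

/-- Signed edge `(i, j, ε)` of the global interaction graph `G(f)(Y)`
(for `Y = Set.univ` this is the global interaction graph `G(f)`). -/
def GEdge {n : ℕ} {p : Fin n → ℕ} (f : NState p → NState p) (Y : Set (NState p))
    (i j : Fin n) (ε : ℤ) : Prop :=
  ∃ x ∈ Y, ∃ x' : NState p, ∃ c : ℤ, (c = 1 ∨ c = -1) ∧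
    (∀ l, l ≠ i → x' l = x l) ∧ (((x' i : ℕ) : ℤ) = ((x i : ℕ) : ℤ) + c) ∧
    Int.sign (((f x' j : ℕ) : ℤ) - ((f x j : ℕ) : ℤ)) * c = ε

/-- Signed edge `(i, j, ε)` of `G(f|_M)`: both states involved must lie in `M`. -/
def GEdgeRestr {n : ℕ} {p : Fin n → ℕ} (f : NState p → NState p) (M : SymState p)
    (i j : Fin n) (ε : ℤ) : Prop :=
  ∃ x x' : NState p, memBox x M ∧ memBox x' M ∧ ∃ c : ℤ, (c = 1 ∨ c = -1) ∧
    (∀ l, l ≠ i → x' l = x l) ∧ (((x' i : ℕ) : ℤ) = ((x i : ℕ) : ℤ) + c) ∧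
    Int.sign (((f x' j : ℕ) : ℤ) - ((f x j : ℕ) : ℤ)) * c = ε

/-- `J(M)`: the set of symbolic-valued (non-singleton) components of `M`. -/
def JSet {n : ℕ} {p : Fin n → ℕ} (M : SymState p) : Set (Fin n) :=
  {i | 1 < (M i).card}

/-- Signed edge of `G^θ(M)`: an edge of `G(f|_M)` with both end-vertices in `J(M)`. -/
def ThetaEdge {n : ℕ} {p : Fin n → ℕ} (f : NState p → NState p) (M : SymState p)
    (i j : Fin n) (ε : ℤ) : Prop :=
  i ∈ JSet M ∧ j ∈ JSet M ∧ GEdgeRestr f M i j ε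

/-- Adjacency (some signed edge) in `G^θ(M)`. -/
def ThetaAdj {n : ℕ} {p : Fin n → ℕ} (f : NState p → NState p) (M : SymState p)
    (i j : Fin n) : Prop :=
  ∃ ε : ℤ, (ε = 1 ∨ ε = -1) ∧ ThetaEdge f M i j ε

/-- Weak connectivity in `G^θ(M)`. -/
def ThetaConn {n : ℕ} {p : Fin n → ℕ} (f : NState p → NState p) (M : SymState p) :
    Fin n → Fin n → Prop :=
  Relation.ReflTransGen fun a b => ThetaAdj f M a b ∨ ThetaAdj f M b a

/-- `V` is the vertex set of a component (maximal weakly connected subgraph) of `G^θ(M)`;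
since components are induced subgraphs, they are determined by their vertex sets. -/
def IsComponent {n : ℕ} {p : Fin n → ℕ} (f : NState p → NState p) (M : SymState p)
    (V : Set (Fin n)) : Prop :=
  ∃ i ∈ JSet M, V = {j | j ∈ JSet M ∧ ThetaConn f M i j}

/-- States of a network module with component set `V ⊆ {1,…,n}`
(vertices of `G(g)` renamed via the order-preserving bijection `ι`). -/
abbrev MState {n : ℕ} (p : Fin n → ℕ) (V : Set (Fin n)) := ∀ i : V, Fin (p i.1 + 1)

/-- The projection `π^V` onto the components in `V`. -/
def projV {n : ℕ} {p : Fin n → ℕ} (V : Set (Fin n)) (x : NState p) : MState p V :=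
  fun i => x i.1

open Classical in
/-- `ρ^V : X^V → X^□`, filling components outside `V` with `M_i`. -/
noncomputable def rhoV {n : ℕ} {p : Fin n → ℕ} (M : SymState p) (V : Set (Fin n))
    (z : MState p V) : SymState p :=
  fun i => if h : i ∈ V then {z ⟨i, h⟩} else M i

/-- The network module `f^V = π^V ∘ F ∘ ρ^V` derived from a component with vertex set `V`
(`Finset.inf _ id` extracts the unique element of the singleton `F_i(ρ^V(z))`). -/
noncomputable def modFun {n : ℕ} {p : Fin n → ℕ} (f : NState p → NState p)
    (M : SymState p) (V : Set (Fin n)) (z : MState p V) : MState p V :=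
  fun i => (Fop f (rhoV M V z) i.1).inf id

/-- `z` lies in the module state space `X^V = ∏_{i ∈ V} M_i`. -/
def memBoxV {n : ℕ} {p : Fin n → ℕ} (M : SymState p) (V : Set (Fin n))
    (z : MState p V) : Prop :=
  ∀ i : V, z i ∈ M i.1

/-- Edge of the asynchronous state transition graph `S(g)` of a module `g` with
state space `X^V = ∏_{i ∈ V} M_i`. -/
def ModAsyncEdge {n : ℕ} {p : Fin n → ℕ} (M : SymState p) (V : Set (Fin n))
    (g : MState p V → MState p V) (z z' : MState p V) : Prop :=
  memBoxV M V z ∧ memBoxV M V z' ∧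
  ((z' = z ∧ g z = z) ∨
   ∃ i : V, g z i ≠ z i ∧ (∀ l, l ≠ i → z' l = z l) ∧
     ((z i < g z i ∧ (z' i : ℕ) = (z i : ℕ) + 1) ∨
      (g z i < z i ∧ (z' i : ℕ) + 1 = (z i : ℕ))))

/-- Attractor of the state transition graph of a module with state space `X^V`. -/
def IsModAttractor {n : ℕ} {p : Fin n → ℕ} (M : SymState p) (V : Set (Fin n))
    (g : MState p V → MState p V) (A : Set (MState p V)) : Prop :=
  A.Nonempty ∧ (∀ z ∈ A, memBoxV M V z) ∧
  (∀ z ∈ A, ∀ z', ModAsyncEdge M V g z z' → z' ∈ A) ∧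
  ∀ z ∈ A, ∀ z' ∈ A, Relation.ReflTransGen (ModAsyncEdge M V g) z z'

/-- Edge of the product state transition graph `S^M` (Def. 4.1),
given the components `V 1, …, V m` of `G^θ(M)`. -/
noncomputable def SMEdge {n : ℕ} {p : Fin n → ℕ} (f : NState p → NState p)
    (M : SymState p) {m : ℕ} (V : Fin m → Set (Fin n)) (x1 x2 : NState p) : Prop :=
  memBox x1 M ∧ memBox x2 M ∧
  ((x1 = x2 ∧ ∀ j, ModAsyncEdge M (V j) (modFun f M (V j))
      (projV (V j) x1) (projV (V j) x2)) ∨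
   ∃ j, ModAsyncEdge M (V j) (modFun f M (V j)) (projV (V j) x1) (projV (V j) x2) ∧
     ∀ i, i ∉ V j → x1 i = x2 i)

section Aux
variable {n : ℕ} {p : Fin n → ℕ}

lemma fop_mem (f : NState p → NState p) {x : NState p} {M : SymState p}
    (hx : memBox x M) (j : Fin n) : f x j ∈ Fop f M j := by
  have hx' : x ∈ Fintype.piFinset M := Fintype.mem_piFinset.2 hx
  exact Finset.mem_Icc.2 ⟨Finset.inf_le (f := fun y => f y j) hx', Finset.le_sup (f := fun y => f y j) hx'⟩

lemma fop_mono (f : NState p → NState p) {M N : SymState p} (h : ∀ i, M i ⊆ N i) (j : Fin n) :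
    Fop f M j ⊆ Fop f N j := by
  have hsub : Fintype.piFinset M ⊆ Fintype.piFinset N := by
    intro x hx
    exact Fintype.mem_piFinset.2 fun i => h i (Fintype.mem_piFinset.1 hx i)
  exact Finset.Icc_subset_Icc (Finset.inf_mono hsub) (Finset.sup_mono hsub)

lemma efo_succ (f : NState p → NState p) (M : SymState p) (l : ℕ) :
    efoSeq f M (l+1) = fun j =>
      Finset.Icc ((efoSeq f M l j ∪ Fop f (efoSeq f M l) j).inf id)
                 ((efoSeq f M l j ∪ Fop f (efoSeq f M l) j).sup id) := rfl

lemma efo_succ_subset (f : NState p → NState p) (M : SymState p) (l : ℕ) (j : Fin n) :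
    efoSeq f M l j ⊆ efoSeq f M (l+1) j := by
  intro a ha
  have ha' : a ∈ efoSeq f M l j ∪ Fop f (efoSeq f M l) j := Finset.mem_union_left _ ha
  rw [efo_succ]
  exact Finset.mem_Icc.2 ⟨Finset.inf_le (f := id) ha', Finset.le_sup (f := id) ha'⟩

lemma efo_subset {f : NState p → NState p} {M : SymState p} {l l' : ℕ} (h : l ≤ l')
    (j : Fin n) : efoSeq f M l j ⊆ efoSeq f M l' j := by
  induction l' with
  | zero => cases Nat.le_zero.1 h; exact Finset.Subset.refl _
  | succ t ih =>
    rcases Nat.lt_or_ge l (t+1) with hl | hl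
    · exact (ih (Nat.lt_succ_iff.1 hl)).trans (efo_succ_subset f M t j)
    · have : l = t + 1 := le_antisymm h hl
      subst this; exact Finset.Subset.refl _

lemma exists_eq_succ_of_measure (g : ℕ → SymState p) (c : ℕ → ℕ) (B : ℕ)
    (hb : ∀ l, c l ≤ B) (hstrict : ∀ l, g l ≠ g (l+1) → c l < c (l+1)) :
    ∃ l, g l = g (l+1) := by
  by_contra h
  push_neg at h
  have key : ∀ l, l ≤ c l := by
    intro l
    induction l with
    | zero => exact Nat.zero_le _
    | succ t ih => exact Nat.lt_of_le_of_lt ih (hstrict t (h t))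
  have := key (B+1)
  have := hb (B+1)
  omega

lemma sum_card_lt_of_ne_subset {M N : SymState p} (hne : M ≠ N) (hsub : ∀ i, M i ⊆ N i) :
    (∑ i, (M i).card) < ∑ i, (N i).card := by
  have hex : ∃ i, M i ≠ N i := by
    by_contra h; push_neg at h; exact hne (funext h)
  obtain ⟨i, hi⟩ := hex
  exact Finset.sum_lt_sum (fun j _ => Finset.card_le_card (hsub j))
    ⟨i, Finset.mem_univ i, Finset.card_lt_card (Finset.ssubset_iff_subset_ne.2 ⟨hsub i, hi⟩)⟩

lemma efo_stab (f : NState p → NState p) (M : SymState p) :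
    ∃ N, ∀ l ≥ N, efoSeq f M l = efoSeq f M N := by
  obtain ⟨N, hN⟩ := exists_eq_succ_of_measure (efoSeq f M)
    (fun l => ∑ i, (efoSeq f M l i).card) (∑ i : Fin n, (p i + 1))
    (fun l => Finset.sum_le_sum fun i _ => by
      simpa using Finset.card_le_card (Finset.subset_univ (efoSeq f M l i)))
    (fun l hne => sum_card_lt_of_ne_subset hne (efo_succ_subset f M l))
  refine ⟨N, ?_⟩
  have hconst : ∀ d, efoSeq f M (N + d) = efoSeq f M N := by
    intro d
    induction d with
    | zero => rfl
    | succ t ih =>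
      have : efoSeq f M (N + t + 1) = efoSeq f M (N + 1) := by
        rw [efo_succ, efo_succ, ih]
      rw [show N + (t+1) = N + t + 1 from rfl, this, ← hN]
  intro l hl
  obtain ⟨d, rfl⟩ := Nat.exists_eq_add_of_le hl
  exact hconst d

end Aux
section Aux2
variable {n : ℕ} {p : Fin n → ℕ}

/-- After the efo sequence stabilizes, `Fop` maps the limit into itself. -/
lemma fop_subset_of_efo_fix {f : NState p → NState p} {M : SymState p} {N : ℕ}
    (h : efoSeq f M (N+1) = efoSeq f M N) (j : Fin n) :
    Fop f (efoSeq f M N) j ⊆ efoSeq f M N j := by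
  intro a ha
  have ha' : a ∈ efoSeq f M N j ∪ Fop f (efoSeq f M N) j := Finset.mem_union_right _ ha
  rw [← h, efo_succ]
  exact Finset.mem_Icc.2 ⟨Finset.inf_le (f := id) ha', Finset.le_sup (f := id) ha'⟩

/-- The decreasing sequence `M^0 = M̃`, `M^{l+1} = F(M^l)`. -/
lemma mseq_decreasing {f : NState p → NState p} {Mt : SymState p}
    (hfix : ∀ j, Fop f Mt j ⊆ Mt j) :
    ∀ l j, (Fop f)^[l+1] Mt j ⊆ (Fop f)^[l] Mt j := by
  intro l
  induction l with
  | zero => intro j; exact hfix j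
  | succ t ih =>
    intro j
    rw [Function.iterate_succ_apply', Function.iterate_succ_apply']
    exact fop_mono f (fun i => by
      have := ih i
      rwa [Function.iterate_succ_apply'] at this) j

lemma mseq_stab {f : NState p → NState p} {Mt : SymState p}
    (hfix : ∀ j, Fop f Mt j ⊆ Mt j) :
    ∃ N, ∀ l ≥ N, (Fop f)^[l] Mt = (Fop f)^[N] Mt := by
  have B := ∑ i : Fin n, (p i + 1)
  obtain ⟨N, hN⟩ := exists_eq_succ_of_measure (fun l => (Fop f)^[l] Mt)
    (fun l => (∑ i : Fin n, (p i + 1)) - ∑ i, ((Fop f)^[l] Mt i).card)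
    (∑ i : Fin n, (p i + 1)) (fun l => Nat.sub_le _ _)
    (fun l hne => by
      have hlt : (∑ i, ((Fop f)^[l+1] Mt i).card) < ∑ i, ((Fop f)^[l] Mt i).card :=
        sum_card_lt_of_ne_subset (Ne.symm hne) (fun i => mseq_decreasing hfix l i)
      have hle : (∑ i, ((Fop f)^[l] Mt i).card) ≤ ∑ i : Fin n, (p i + 1) :=
        Finset.sum_le_sum fun i _ => by
          simpa using Finset.card_le_card (Finset.subset_univ ((Fop f)^[l] Mt i))
      omega)
  refine ⟨N, fun l hl => ?_⟩
  obtain ⟨d, rfl⟩ := Nat.exists_eq_add_of_le hl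
  clear hl
  induction d with
  | zero => rfl
  | succ t ih =>
    have : (Fop f)^[N + t + 1] Mt = Fop f ((Fop f)^[N + t] Mt) :=
      Function.iterate_succ_apply' _ _ _
    rw [show N + (t+1) = N + t + 1 from rfl, this, ih,
      ← Function.iterate_succ_apply' (Fop f) N Mt, hN]

end Aux2
section Aux3
variable {n : ℕ} {p : Fin n → ℕ}

lemma rtg_mem {f : NState p → NState p} {A : Set (NState p)}
    (hA : IsAttractor f A) {x y : NState p}
    (h : Relation.ReflTransGen (AsyncEdge f) x y) (hx : x ∈ A) : y ∈ A := by
  induction h with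
  | refl => exact hx
  | tail _ he ih => exact hA.1.2 _ ih _ he

lemma input_const {f : NState p → NState p} {k : ℕ}
    (hin : ∀ i : Fin n, (i:ℕ) < k → ∀ x, f x i = x i)
    {x y : NState p} (h : Relation.ReflTransGen (AsyncEdge f) x y) :
    ∀ i : Fin n, (i:ℕ) < k → y i = x i := by
  induction h with
  | refl => intro i _; rfl
  | tail _ he ih =>
    intro i hik
    rcases he with ⟨rfl, _⟩ | ⟨j, hne, hoff, _⟩
    · exact ih i hik
    · have hji : i ≠ j := by rintro rfl; exact hne (hin i hik _)
      rw [hoff i hji]; exact ih i hik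

lemma attractor_sub_fop (f : NState p → NState p) {A : Set (NState p)}
    (hA : IsAttractor f A) {M : SymState p} (hAM : ∀ x ∈ A, memBox x M) :
    ∀ x ∈ A, memBox x (Fop f M) := by
  intro x hx i
  set a := (Fintype.piFinset M).inf (fun y => f y i) with ha
  set b := (Fintype.piFinset M).sup (fun y => f y i) with hb
  have hf : ∀ y ∈ A, a ≤ f y i ∧ f y i ≤ b := by
    intro y hy
    exact Finset.mem_Icc.1 (fop_mem f (hAM y hy) i)
  -- upper bound: trap property
  have htrapU : ∀ y ∈ A, y i ≤ b → ∀ y', AsyncEdge f y y' → y' i ≤ b := by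
    intro y hy hyb y' he
    rcases he with ⟨rfl, _⟩ | ⟨j, hne, hoff, hcase⟩
    · exact hyb
    · by_cases hji : j = i
      · subst hji
        rcases hcase with ⟨hlt, hval⟩ | ⟨hlt, hval⟩
        · have h1 : (y j : ℕ) < (f y j : ℕ) := hlt
          have h2 : (f y j : ℕ) ≤ (b : ℕ) := (hf y hy).2
          exact Fin.le_def.2 (by omega)
        · have h2 : (y j : ℕ) ≤ (b : ℕ) := hyb
          exact Fin.le_def.2 (by omega)
      · rw [hoff i (fun h => hji h.symm)]
        exact hyb
  have htrapL : ∀ y ∈ A, a ≤ y i → ∀ y', AsyncEdge f y y' → a ≤ y' i := by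
    intro y hy hya y' he
    rcases he with ⟨rfl, _⟩ | ⟨j, hne, hoff, hcase⟩
    · exact hya
    · by_cases hji : j = i
      · subst hji
        rcases hcase with ⟨hlt, hval⟩ | ⟨hlt, hval⟩
        · have h2 : (a : ℕ) ≤ (y j : ℕ) := hya
          exact Fin.le_def.2 (by omega)
        · have h1 : (f y j : ℕ) < (y j : ℕ) := hlt
          have h2 : (a : ℕ) ≤ (f y j : ℕ) := (hf y hy).1
          exact Fin.le_def.2 (by omega)
      · rw [hoff i (fun h => hji h.symm)]
        exact hya
  -- reach a state with coordinate ≤ b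
  have hreachU : ∀ N : ℕ, ∀ y ∈ A, (y i : ℕ) ≤ N → ∃ z ∈ A, z i ≤ b := by
    intro N
    induction N with
    | zero => exact fun y hy h0 => ⟨y, hy, Fin.le_def.2 (by omega)⟩
    | succ N ih =>
      intro y hy hN
      by_cases hyb : y i ≤ b
      · exact ⟨y, hy, hyb⟩
      · push_neg at hyb
        have hflt : (f y i : ℕ) ≤ (b : ℕ) := (hf y hy).2
        have hbi : (b : ℕ) < (y i : ℕ) := hyb
        have hisLt := (y i).isLt
        set v : Fin (p i + 1) := ⟨(y i : ℕ) - 1, by omega⟩ with hv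
        have hedge : AsyncEdge f y (Function.update y i v) := by
          refine Or.inr ⟨i, ?_, ?_, Or.inr ⟨?_, ?_⟩⟩
          · intro hfy; rw [hfy] at hflt; omega
          · intro l hl; exact Function.update_of_ne hl _ _
          · exact Fin.lt_def.2 (by omega)
          · rw [Function.update_self]
            show (y i : ℕ) - 1 + 1 = (y i : ℕ)
            omega
        have hyA' := hA.1.2 y hy _ hedge
        refine ih _ hyA' ?_
        have hvv : ((Function.update y i v) i : ℕ) = (y i : ℕ) - 1 := by
          rw [Function.update_self]
        omega
  have hreachL : ∀ N : ℕ, ∀ y ∈ A, (p i) - (y i : ℕ) ≤ N → ∃ z ∈ A, a ≤ z i := by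
    intro N
    induction N with
    | zero =>
      intro y hy h0
      have := a.isLt
      exact ⟨y, hy, Fin.le_def.2 (by omega)⟩
    | succ N ih =>
      intro y hy hN
      by_cases hya : a ≤ y i
      · exact ⟨y, hy, hya⟩
      · push_neg at hya
        have hfgt : (a : ℕ) ≤ (f y i : ℕ) := (hf y hy).1
        have hai : (y i : ℕ) < (a : ℕ) := hya
        have hisLt := a.isLt
        set v : Fin (p i + 1) := ⟨(y i : ℕ) + 1, by omega⟩ with hv
        have hedge : AsyncEdge f y (Function.update y i v) := by
          refine Or.inr ⟨i, ?_, ?_, Or.inl ⟨?_, ?_⟩⟩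
          · intro hfy; rw [hfy] at hfgt; omega
          · intro l hl; exact Function.update_of_ne hl _ _
          · exact Fin.lt_def.2 (by omega)
          · rw [Function.update_self]
        have hyA' := hA.1.2 y hy _ hedge
        refine ih _ hyA' ?_
        have hvv : ((Function.update y i v) i : ℕ) = (y i : ℕ) + 1 := by
          rw [Function.update_self]
        omega
  obtain ⟨x0, hx0⟩ := hA.1.1
  obtain ⟨z, hz, hzb⟩ := hreachU _ x0 hx0 le_rfl
  obtain ⟨w, hw, hwa⟩ := hreachL _ x0 hx0 le_rfl
  have genU : ∀ {u v : NState p}, Relation.ReflTransGen (AsyncEdge f) u v →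
      u ∈ A → u i ≤ b → v i ≤ b := by
    intro u v h
    induction h with
    | refl => exact fun _ h2 => h2
    | tail hr he ih =>
      intro h1 h2
      exact htrapU _ (rtg_mem hA hr h1) (ih h1 h2) _ he
  have genL : ∀ {u v : NState p}, Relation.ReflTransGen (AsyncEdge f) u v →
      u ∈ A → a ≤ u i → a ≤ v i := by
    intro u v h
    induction h with
    | refl => exact fun _ h2 => h2
    | tail hr he ih =>
      intro h1 h2
      exact htrapL _ (rtg_mem hA hr h1) (ih h1 h2) _ he
  exact Finset.mem_Icc.2 ⟨genL (hA.2 w hw x hx) hw hwa, genU (hA.2 z hz x hx) hz hzb⟩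

end Aux3
section Aux4
variable {n : ℕ} {p : Fin n → ℕ}

lemma comp_sub_J {f : NState p → NState p} {M : SymState p} {W : Set (Fin n)}
    (hW : IsComponent f M W) : W ⊆ JSet M := by
  obtain ⟨i0, _, rfl⟩ := hW
  exact fun j hj => hj.1

lemma comp_closed {f : NState p → NState p} {M : SymState p} {W : Set (Fin n)}
    (hW : IsComponent f M W) {i j : Fin n} (hj : j ∈ W) (hi : i ∈ JSet M)
    (hadj : ThetaAdj f M i j) : i ∈ W := by
  obtain ⟨i0, hi0, rfl⟩ := hW
  exact ⟨hi, Relation.ReflTransGen.tail hj.2 (Or.inr hadj)⟩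

lemma comp_mem_self {f : NState p → NState p} {M : SymState p} {i : Fin n}
    (hi : i ∈ JSet M) : ∃ W, IsComponent f M W ∧ i ∈ W :=
  ⟨_, ⟨i, hi, rfl⟩, ⟨hi, Relation.ReflTransGen.refl⟩⟩

lemma comp_disjoint {f : NState p → NState p} {M : SymState p} {W W' : Set (Fin n)}
    (hW : IsComponent f M W) (hW' : IsComponent f M W') (hne : W ≠ W') {i : Fin n}
    (hiW : i ∈ W) (hiW' : i ∈ W') : False := by
  obtain ⟨i0, hi0, rfl⟩ := hW
  obtain ⟨i1, hi1, rfl⟩ := hW'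
  have hsymm : Symmetric fun a b => ThetaAdj f M a b ∨ ThetaAdj f M b a :=
    fun a b h => h.symm
  have hconn01 : ThetaConn f M i0 i1 :=
    Relation.ReflTransGen.trans hiW.2 (@Std.Symm.symm _ _ (@Relation.ReflTransGen.stdSymm _ _ ⟨fun a b h => hsymm h⟩) _ _ hiW'.2)
  apply hne
  ext j
  constructor
  · rintro ⟨hjJ, hconn⟩
    exact ⟨hjJ, Relation.ReflTransGen.trans
      (@Std.Symm.symm _ _ (@Relation.ReflTransGen.stdSymm _ _ ⟨fun a b h => hsymm h⟩) _ _ hconn01) hconn⟩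
  · rintro ⟨hjJ, hconn⟩
    exact ⟨hjJ, Relation.ReflTransGen.trans hconn01 hconn⟩

/-- One ±1 step in a coordinate outside the component of `j` does not change `f · j`. -/
lemma step_indep {f : NState p → NState p} {M : SymState p} {W : Set (Fin n)}
    (hW : IsComponent f M W) {j : Fin n} (hj : j ∈ W) {i : Fin n} (hi : i ∉ W)
    {x x' : NState p} (hx : memBox x M) (hx' : memBox x' M)
    (hoff : ∀ l, l ≠ i → x' l = x l)
    (hstep : ((x' i : ℕ) = (x i : ℕ) + 1) ∨ ((x i : ℕ) = (x' i : ℕ) + 1)) :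
    f x' j = f x j := by
  by_contra hne
  have hiJ : i ∈ JSet M := by
    refine Finset.one_lt_card.2 ⟨x i, hx i, x' i, hx' i, ?_⟩
    intro h
    have := congrArg Fin.val h
    omega
  have hjJ : j ∈ JSet M := comp_sub_J hW hj
  have hd : (((f x' j : ℕ) : ℤ) - ((f x j : ℕ) : ℤ)) ≠ 0 := by
    intro h
    exact hne (Fin.val_injective (by omega))
  set d : ℤ := ((f x' j : ℕ) : ℤ) - ((f x j : ℕ) : ℤ) with hdd
  have hsgn : d.sign = 1 ∨ d.sign = -1 := by
    rcases lt_trichotomy d 0 with h | h | h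
    · exact Or.inr (Int.sign_eq_neg_one_of_neg h)
    · exact absurd h hd
    · exact Or.inl (Int.sign_eq_one_of_pos h)
  rcases hstep with hs | hs
  · have hadj : ThetaAdj f M i j := by
      refine ⟨d.sign * 1, by rcases hsgn with h | h <;> simp [h], hiJ, hjJ,
        x, x', hx, hx', 1, Or.inl rfl, hoff, by omega, rfl⟩
    exact hi (comp_closed hW hj hiJ hadj)
  · have hadj : ThetaAdj f M i j := by
      refine ⟨d.sign * (-1), by rcases hsgn with h | h <;> simp [h], hiJ, hjJ,
        x, x', hx, hx', -1, Or.inr rfl, hoff, by omega, rfl⟩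
    exact hi (comp_closed hW hj hiJ hadj)

/-- Changing a single coordinate outside the component of `j` (to any value in `M i`)
does not change `f · j`. -/
lemma coord_indep {f : NState p → NState p} {M : SymState p} (hbox : IsBox M)
    {W : Set (Fin n)} (hW : IsComponent f M W) {j : Fin n} (hj : j ∈ W)
    {i : Fin n} (hi : i ∉ W) :
    ∀ N : ℕ, ∀ x : NState p, memBox x M → ∀ v : Fin (p i + 1), v ∈ M i →
      ((v : ℕ) - (x i : ℕ)) + ((x i : ℕ) - (v : ℕ)) ≤ N →
      f (Function.update x i v) j = f x j := by
  intro N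
  induction N with
  | zero =>
    intro x hx v hv h0
    have : v = x i := Fin.val_injective (by omega)
    rw [this, Function.update_eq_self]
  | succ N ih =>
    intro x hx v hv hN
    by_cases hvx : v = x i
    · rw [hvx, Function.update_eq_self]
    · obtain ⟨lo, hi', hle, hMi⟩ := hbox i
      have hxlo : lo ≤ x i ∧ x i ≤ hi' := Finset.mem_Icc.1 (by rw [← hMi]; exact hx i)
      have hvlo : lo ≤ v ∧ v ≤ hi' := Finset.mem_Icc.1 (by rw [← hMi]; exact hv)
      have hvne : (v : ℕ) ≠ (x i : ℕ) := fun h => hvx (Fin.val_injective h)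
      rcases Nat.lt_or_ge (x i : ℕ) (v : ℕ) with hlt | hge
      · -- step up
        set w : Fin (p i + 1) := ⟨(x i : ℕ) + 1, by have := v.isLt; omega⟩ with hw
        have hwM : w ∈ M i := by
          rw [hMi]
          refine Finset.mem_Icc.2 ⟨Fin.le_def.2 ?_, Fin.le_def.2 ?_⟩
          · have := Fin.le_def.1 hxlo.1; show (lo : ℕ) ≤ (x i : ℕ) + 1; omega
          · have := Fin.le_def.1 hvlo.2; show (x i : ℕ) + 1 ≤ (hi' : ℕ); omega
        set x1 := Function.update x i w with hx1
        have hx1M : memBox x1 M := by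
          intro l
          by_cases hl : l = i
          · subst hl; rw [hx1, Function.update_self]; exact hwM
          · rw [hx1, Function.update_of_ne hl]; exact hx l
        have hstep : f x1 j = f x j := by
          refine step_indep hW hj hi hx hx1M (fun l hl => Function.update_of_ne hl _ _) ?_
          left; rw [hx1, Function.update_self]
        have hupd : Function.update x i v = Function.update x1 i v := by
          rw [hx1, Function.update_idem]
        rw [hupd, ← hstep]
        refine ih x1 hx1M v hv ?_
        have : (x1 i : ℕ) = (x i : ℕ) + 1 := by rw [hx1, Function.update_self]
        omega
      · -- step down
        set w : Fin (p i + 1) := ⟨(x i : ℕ) - 1, by have := (x i).isLt; omega⟩ with hw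
        have hwM : w ∈ M i := by
          rw [hMi]
          refine Finset.mem_Icc.2 ⟨Fin.le_def.2 ?_, Fin.le_def.2 ?_⟩
          · have := Fin.le_def.1 hvlo.1; show (lo : ℕ) ≤ (x i : ℕ) - 1; omega
          · have := Fin.le_def.1 hxlo.2; show (x i : ℕ) - 1 ≤ (hi' : ℕ); omega
        set x1 := Function.update x i w with hx1
        have hx1M : memBox x1 M := by
          intro l
          by_cases hl : l = i
          · subst hl; rw [hx1, Function.update_self]; exact hwM
          · rw [hx1, Function.update_of_ne hl]; exact hx l
        have hstep : f x1 j = f x j := by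
          refine step_indep hW hj hi hx hx1M (fun l hl => Function.update_of_ne hl _ _) ?_
          right; rw [hx1, Function.update_self]
          show (x i : ℕ) = (x i : ℕ) - 1 + 1; omega
        have hupd : Function.update x i v = Function.update x1 i v := by
          rw [hx1, Function.update_idem]
        rw [hupd, ← hstep]
        refine ih x1 hx1M v hv ?_
        have : (x1 i : ℕ) = (x i : ℕ) - 1 := by rw [hx1, Function.update_self]
        omega

/-- On the box `M`, `f · j` depends only on the coordinates in the component of `j`. -/
lemma indep {f : NState p → NState p} {M : SymState p} (hbox : IsBox M)
    {W : Set (Fin n)} (hW : IsComponent f M W) {j : Fin n} (hj : j ∈ W) :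
    ∀ N : ℕ, ∀ x y : NState p, memBox x M → memBox y M →
      (∀ i, i ∈ W → x i = y i) →
      (Finset.univ.filter fun i => x i ≠ y i).card ≤ N → f x j = f y j := by
  intro N
  induction N with
  | zero =>
    intro x y hx hy hagree h0
    have : x = y := by
      funext i
      by_contra hne
      have : i ∈ Finset.univ.filter fun i => x i ≠ y i := by
        simp [hne]
      rw [Finset.card_eq_zero.1 (Nat.le_zero.1 h0)] at this
      exact absurd this (Finset.notMem_empty _)
    rw [this]
  | succ N ih =>
    intro x y hx hy hagree hN
    by_cases hxy : x = y
    · rw [hxy]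
    · have hex : ∃ i, x i ≠ y i := by
        by_contra h; push_neg at h; exact hxy (funext h)
      obtain ⟨i, hine⟩ := hex
      have hiW : i ∉ W := fun h => hine (hagree i h)
      set x1 := Function.update x i (y i) with hx1
      have hx1M : memBox x1 M := by
        intro l
        by_cases hl : l = i
        · subst hl; rw [hx1, Function.update_self]; exact hy l
        · rw [hx1, Function.update_of_ne hl]; exact hx l
      have hstep : f x1 j = f x j :=
        coord_indep hbox hW hj hiW _ x hx (y i) (hy i) le_rfl
      have hagree1 : ∀ l, l ∈ W → x1 l = y l := by
        intro l hl
        by_cases hli : l = i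
        · subst hli; rw [hx1, Function.update_self]
        · rw [hx1, Function.update_of_ne hli]; exact hagree l hl
      have hsub : (Finset.univ.filter fun l => x1 l ≠ y l) ⊆
          (Finset.univ.filter fun l => x l ≠ y l).erase i := by
        intro l hl
        simp only [Finset.mem_filter, Finset.mem_univ, true_and] at hl
        have hli : l ≠ i := by
          intro h; subst h; exact hl (by rw [hx1, Function.update_self])
        refine Finset.mem_erase.2 ⟨hli, ?_⟩
        simp only [Finset.mem_filter, Finset.mem_univ, true_and]
        rwa [hx1, Function.update_of_ne hli] at hl
      have hcard : (Finset.univ.filter fun l => x1 l ≠ y l).card ≤ N := by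
        have h1 := Finset.card_le_card hsub
        have h2 : i ∈ Finset.univ.filter fun l => x l ≠ y l := by simp [hine]
        have h3 := Finset.card_erase_of_mem h2
        omega
      rw [← hstep]
      exact ih x1 y hx1M hy hagree1 hcard

end Aux4
section Aux5
variable {n : ℕ} {p : Fin n → ℕ}

lemma fop_nonempty (f : NState p → NState p) {M : SymState p}
    (h : ∀ i, (M i).Nonempty) (j : Fin n) : (Fop f M j).Nonempty := by
  classical
  have hx : memBox (fun i => (h i).choose) M := fun i => (h i).choose_spec
  exact ⟨f _ j, fop_mem f hx j⟩

lemma frozen_eq {f : NState p → NState p} {M : SymState p} (hfix : Fop f M = M)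
    {i : Fin n} (hcard : (M i).card = 1) {x : NState p} (hx : memBox x M) :
    f x i = x i := by
  obtain ⟨c, hc⟩ := Finset.card_eq_one.1 hcard
  have h1 : f x i ∈ M i := by have := fop_mem f hx i; rwa [hfix] at this
  have h2 := hx i
  rw [hc] at h1 h2
  rw [Finset.mem_singleton.1 h1, Finset.mem_singleton.1 h2]

lemma modEval {f : NState p → NState p} {M : SymState p} (hbox : IsBox M)
    {W : Set (Fin n)} (hW : IsComponent f M W) {x : NState p} (hx : memBox x M)
    (j : Fin n) (hj : j ∈ W) :
    modFun f M W (projV W x) ⟨j, hj⟩ = f x j := by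
  have hxmem : memBox x (rhoV M W (projV W x)) := by
    intro i
    by_cases h : i ∈ W
    · simp [rhoV, h, projV]
    · simp only [rhoV, dif_neg h]; exact hx i
  have key : ∀ y, memBox y (rhoV M W (projV W x)) → f y j = f x j := by
    intro y hy
    have hyW : ∀ i, i ∈ W → y i = x i := by
      intro i hiW
      have := hy i
      simp only [rhoV, dif_pos hiW, Finset.mem_singleton] at this
      exact this
    have hyM : memBox y M := by
      intro i
      by_cases h : i ∈ W
      · rw [hyW i h]; exact hx i
      · have := hy i; simp only [rhoV, dif_neg h] at this; exact this
    exact indep hbox hW hj _ y x hyM hx hyW le_rfl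
  have hxpi : x ∈ Fintype.piFinset (rhoV M W (projV W x)) := Fintype.mem_piFinset.2 hxmem
  have hinf : (Fintype.piFinset (rhoV M W (projV W x))).inf (fun y => f y j) = f x j := by
    apply le_antisymm
    · exact Finset.inf_le (f := fun y => f y j) hxpi
    · exact Finset.le_inf fun y hy => (key y (Fintype.mem_piFinset.1 hy)).ge
  have hsup : (Fintype.piFinset (rhoV M W (projV W x))).sup (fun y => f y j) = f x j := by
    apply le_antisymm
    · exact Finset.sup_le fun y hy => (key y (Fintype.mem_piFinset.1 hy)).le
    · exact Finset.le_sup (f := fun y => f y j) hxpi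
  show (Fop f (rhoV M W (projV W x)) j).inf id = f x j
  unfold Fop
  rw [hinf, hsup, Finset.Icc_self, Finset.inf_singleton]
  rfl

lemma edge_proj {f : NState p → NState p} {M : SymState p} (hbox : IsBox M)
    {W : Set (Fin n)} (hW : IsComponent f M W)
    {x x' : NState p} (hx : memBox x M) (hx' : memBox x' M)
    (he : AsyncEdge f x x') :
    (projV W x' = projV W x) ∨
      ModAsyncEdge M W (modFun f M W) (projV W x) (projV W x') := by
  rcases he with ⟨rfl, hfx⟩ | ⟨i, hne, hoff, hcase⟩
  · left; rfl
  · by_cases hiW : i ∈ W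
    · right
      refine ⟨fun l => hx l.1, fun l => hx' l.1, Or.inr ⟨⟨i, hiW⟩, ?_, ?_, ?_⟩⟩
      · show modFun f M W (projV W x) ⟨i, hiW⟩ ≠ x i
        rw [modEval hbox hW hx i hiW]; exact hne
      · intro l hl
        exact hoff l.1 (fun h => hl (Subtype.ext h))
      · rcases hcase with ⟨h1, h2⟩ | ⟨h1, h2⟩
        · left
          refine ⟨?_, h2⟩
          show (x i : Fin _) < modFun f M W (projV W x) ⟨i, hiW⟩
          rw [modEval hbox hW hx i hiW]; exact h1
        · right
          refine ⟨?_, h2⟩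
          show modFun f M W (projV W x) ⟨i, hiW⟩ < x i
          rw [modEval hbox hW hx i hiW]; exact h1
    · left
      funext l
      exact hoff l.1 (fun h => hiW (h ▸ l.2))

lemma path_proj {f : NState p → NState p} {M : SymState p} (hbox : IsBox M)
    {W : Set (Fin n)} (hW : IsComponent f M W) {A : Set (NState p)}
    (hA : IsAttractor f A) (hAM : ∀ x ∈ A, memBox x M)
    {x y : NState p} (h : Relation.ReflTransGen (AsyncEdge f) x y) (hx : x ∈ A) :
    Relation.ReflTransGen (ModAsyncEdge M W (modFun f M W)) (projV W x) (projV W y) := by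
  induction h with
  | refl => exact Relation.ReflTransGen.refl
  | tail hr he ih =>
    have hbmem := rtg_mem hA hr hx
    have hb' := hA.1.2 _ hbmem _ he
    rcases edge_proj hbox hW (hAM _ hbmem) (hAM _ hb') he with heq | hme
    · rw [heq]; exact ih
    · exact ih.tail hme

lemma edge_lift {f : NState p → NState p} {M : SymState p} (hbox : IsBox M)
    {W : Set (Fin n)} (hW : IsComponent f M W) {x : NState p} (hx : memBox x M)
    {z' : MState p W} (hme : ModAsyncEdge M W (modFun f M W) (projV W x) z') :
    ∃ x', Relation.ReflTransGen (AsyncEdge f) x x' ∧ projV W x' = z' ∧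
      ∀ l, l ∉ W → x' l = x l := by
  obtain ⟨hz, hz', hcase⟩ := hme
  rcases hcase with ⟨heq, _⟩ | ⟨i, hgne, hoff, hc⟩
  · exact ⟨x, Relation.ReflTransGen.refl, heq.symm, fun _ _ => rfl⟩
  · refine ⟨Function.update x i.1 (z' i), Relation.ReflTransGen.single ?_, ?_, ?_⟩
    · refine Or.inr ⟨i.1, ?_, ?_, ?_⟩
      · show f x i.1 ≠ x i.1
        rw [← modEval hbox hW hx i.1 i.2]
        exact hgne
      · intro l hl; exact Function.update_of_ne hl _ _
      · have hupd : ((Function.update x i.1 (z' i)) i.1 : ℕ) = (z' i : ℕ) := by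
          rw [Function.update_self]
        have hpx : ((projV W x i : ℕ)) = (x i.1 : ℕ) := rfl
        rcases hc with ⟨h1, h2⟩ | ⟨h1, h2⟩
        · left
          constructor
          · show x i.1 < f x i.1
            rw [← modEval hbox hW hx i.1 i.2]; exact h1
          · omega
        · right
          constructor
          · show f x i.1 < x i.1
            rw [← modEval hbox hW hx i.1 i.2]; exact h1
          · omega
    · funext l
      by_cases hl : l = i
      · subst hl
        show Function.update x l.1 (z' l) l.1 = z' l
        rw [Function.update_self]
      · have hlv : l.1 ≠ i.1 := fun h => hl (Subtype.ext h)
        show Function.update x i.1 (z' i) l.1 = z' l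
        rw [Function.update_of_ne hlv]
        exact (hoff l hl).symm
    · intro l hl
      exact Function.update_of_ne (fun h => hl (by rw [h]; exact i.2)) _ _

lemma path_lift {f : NState p → NState p} {M : SymState p} (hbox : IsBox M)
    {W : Set (Fin n)} (hW : IsComponent f M W) :
    ∀ {z z' : MState p W}, Relation.ReflTransGen (ModAsyncEdge M W (modFun f M W)) z z' →
    ∀ x : NState p, memBox x M → projV W x = z →
    ∃ x', Relation.ReflTransGen (AsyncEdge f) x x' ∧ projV W x' = z' ∧
      ∀ l, l ∉ W → x' l = x l := by
  intro z z' h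
  induction h with
  | refl => exact fun x hx hzx => ⟨x, Relation.ReflTransGen.refl, hzx, fun _ _ => rfl⟩
  | @tail z1 z2 hr he ih =>
    intro x hx hzx
    obtain ⟨x1, hp1, hproj1, hoff1⟩ := ih x hx hzx
    have hx1M : memBox x1 M := by
      intro l
      by_cases hl : l ∈ W
      · have := he.1 ⟨l, hl⟩
        rw [← hproj1] at this
        exact this
      · rw [hoff1 l hl]; exact hx l
    have he' : ModAsyncEdge M W (modFun f M W) (projV W x1) z2 := by
      rw [hproj1]; exact he
    obtain ⟨x2, hp2, hproj2, hoff2⟩ := edge_lift hbox hW hx1M he'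
    exact ⟨x2, hp1.trans hp2, hproj2, fun l hl => (hoff2 l hl).trans (hoff1 l hl)⟩

end Aux5
/-- for a network with input layer whose input vertices are `1, …, k`
and an attractor `A` of `S(f)`, there exist input values such that, with `M` the
steady state derived from the corresponding frozen core, exactly one of the
following holds: `M` is regular and `A = {M}`, or `M` is a symbolic steady state
and `A` is the product of attractors of the module state transition graphs. -/
theorem stmt19 {n : ℕ} {p : Fin n → ℕ} (f : NState p → NState p) (k : ℕ)
    (hin : ∀ i : Fin n, (i : ℕ) < k → ∀ x, f x i = x i)
    (A : Set (NState p)) (hA : IsAttractor f A) :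
    ∃ M' : SymState p,
      (∀ i : Fin n, (i : ℕ) < k → ∃ a, M' i = {a}) ∧
      (∀ i : Fin n, k ≤ (i : ℕ) → M' i = Finset.univ) ∧
      ∃ Mt : SymState p, (∃ N, ∀ l ≥ N, efoSeq f M' l = Mt) ∧
      ∃ Mseq : ℕ → SymState p, Mseq 0 = Mt ∧ (∀ l, Mseq (l + 1) = Fop f (Mseq l)) ∧
      ∃ Mlim : SymState p, (∃ N, ∀ l ≥ N, Mseq l = Mlim) ∧
      ((IsRegular Mlim ∧ A = {x : NState p | memBox x Mlim}) ∨
       (IsSymSteady f Mlim ∧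
        ∃ (m : ℕ) (V : Fin m → Set (Fin n)), Function.Injective V ∧
          (∀ W : Set (Fin n), IsComponent f Mlim W ↔ ∃ j, V j = W) ∧
          ∃ B : ∀ j : Fin m, Set (MState p (V j)),
            (∀ j, IsModAttractor Mlim (V j) (modFun f Mlim (V j)) (B j)) ∧
            A = {a : NState p | memBox a Mlim ∧ ∀ j, projV (V j) a ∈ B j})) := by
  classical
  obtain ⟨a0, ha0⟩ := hA.1.1
  set M' : SymState p := fun i => if (i : ℕ) < k then {a0 i} else Finset.univ with hM'
  refine ⟨M', fun i hik => ⟨a0 i, by simp [hM', hik]⟩,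
    fun i hik => by simp [hM', Nat.not_lt.2 hik], ?_⟩
  obtain ⟨N1, hN1⟩ := efo_stab f M'
  set Mt := efoSeq f M' N1 with hMt
  refine ⟨Mt, ⟨N1, hN1⟩, ?_⟩
  have hfixMt : ∀ j, Fop f Mt j ⊆ Mt j :=
    fop_subset_of_efo_fix (hN1 (N1 + 1) (by omega))
  set Mseq : ℕ → SymState p := fun l => (Fop f)^[l] Mt with hMseqdef
  refine ⟨Mseq, rfl, fun l => Function.iterate_succ_apply' _ _ _, ?_⟩
  obtain ⟨N2, hN2⟩ := mseq_stab hfixMt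
  set Mlim := (Fop f)^[N2] Mt with hMlimdef
  refine ⟨Mlim, ⟨N2, hN2⟩, ?_⟩
  -- basic facts
  have hAM' : ∀ x ∈ A, memBox x M' := by
    intro x hx i
    by_cases hik : (i : ℕ) < k
    · have := input_const hin (hA.2 a0 ha0 x hx) i hik
      simp [hM', hik, this]
    · simp [hM', hik]
  have hAMt : ∀ x ∈ A, memBox x Mt := by
    intro x hx i
    exact efo_subset (Nat.zero_le N1) i (hAM' x hx i)
  have hAMseq : ∀ l, ∀ x ∈ A, memBox x (Mseq l) := by
    intro l
    induction l with
    | zero => exact hAMt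
    | succ t ih =>
      intro x hx i
      have := attractor_sub_fop f hA ih x hx i
      have heq : Mseq (t + 1) = Fop f (Mseq t) := Function.iterate_succ_apply' _ _ _
      rw [heq]
      exact this
  have hAMlim : ∀ x ∈ A, memBox x Mlim := hAMseq N2
  have hneM' : ∀ i, (M' i).Nonempty := by
    intro i
    by_cases hik : (i : ℕ) < k <;> simp [hM', hik]
  have hneMt : ∀ i, (Mt i).Nonempty := by
    intro i
    obtain ⟨c, hc⟩ := hneM' i
    exact ⟨c, efo_subset (Nat.zero_le N1) i hc⟩
  have hneMseq : ∀ l i, (Mseq l i).Nonempty := by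
    intro l
    induction l with
    | zero => exact hneMt
    | succ t ih =>
      intro i
      have heq : Mseq (t + 1) = Fop f (Mseq t) := Function.iterate_succ_apply' _ _ _
      rw [heq]
      exact fop_nonempty f ih i
  have hneMlim : ∀ i, (Mlim i).Nonempty := hneMseq N2
  have hfixlim : Fop f Mlim = Mlim := by
    have h1 : (Fop f)^[N2 + 1] Mt = (Fop f)^[N2] Mt := hN2 (N2 + 1) (by omega)
    rw [Function.iterate_succ_apply'] at h1
    exact h1
  have hboxlim : IsBox Mlim := by
    intro i
    refine ⟨_, _, ?_, (congrFun hfixlim i).symm⟩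
    have h1 := hneMlim i
    rw [← hfixlim] at h1
    exact Finset.nonempty_Icc.1 h1
  by_cases hreg : IsRegular Mlim
  · left
    refine ⟨hreg, ?_⟩
    ext x
    simp only [Set.mem_setOf_eq]
    constructor
    · exact fun hx => hAMlim x hx
    · intro hx
      have ha0M := hAMlim a0 ha0
      have hxa : x = a0 := by
        funext i
        obtain ⟨c, hc⟩ := Finset.card_eq_one.1 (hreg i)
        have h1 := hx i
        have h2 := ha0M i
        rw [hc] at h1 h2
        rw [Finset.mem_singleton.1 h1, Finset.mem_singleton.1 h2]
      rw [hxa]; exact ha0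
  · right
    refine ⟨⟨hboxlim, hreg, hfixlim⟩, ?_⟩
    set C : Set (Set (Fin n)) := {W | IsComponent f Mlim W} with hCdef
    have : Fintype C := Fintype.ofFinite C
    set m := Fintype.card C with hm
    set e : Fin m ≃ C := (Fintype.equivFin C).symm with he
    set V : Fin m → Set (Fin n) := fun j => (e j).1 with hV
    have hVinj : Function.Injective V := fun j j' h => e.injective (Subtype.ext h)
    have hVcomp : ∀ j, IsComponent f Mlim (V j) := fun j => (e j).2
    have hViff : ∀ W, IsComponent f Mlim W ↔ ∃ j, V j = W := by
      intro W
      constructor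
      · intro hW
        refine ⟨e.symm ⟨W, hW⟩, ?_⟩
        show ((e (e.symm ⟨W, hW⟩)) : Set (Fin n)) = W
        rw [Equiv.apply_symm_apply]
      · rintro ⟨j, rfl⟩; exact hVcomp j
    refine ⟨m, V, hVinj, hViff, fun j => projV (V j) '' A, ?_, ?_⟩
    · -- each B j is a module attractor
      intro j
      refine ⟨⟨projV (V j) a0, a0, ha0, rfl⟩, ?_, ?_, ?_⟩
      · rintro z ⟨x, hx, rfl⟩ i
        exact hAMlim x hx i.1
      · rintro z ⟨x, hx, rfl⟩ z' hme
        obtain ⟨x', hrtg, hproj', _⟩ := edge_lift hboxlim (hVcomp j) (hAMlim x hx) hme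
        exact ⟨x', rtg_mem hA hrtg hx, hproj'⟩
      · rintro z ⟨x, hx, rfl⟩ z' ⟨y, hy, rfl⟩
        exact path_proj hboxlim (hVcomp j) hA hAMlim (hA.2 x hx y hy) hx
    · -- A is the product of the B j
      ext a
      simp only [Set.mem_setOf_eq]
      constructor
      · exact fun ha => ⟨hAMlim a ha, fun j => ⟨a, ha, rfl⟩⟩
      · rintro ⟨haM, haB⟩
        have main : ∀ s : Finset (Fin m),
            ∃ x ∈ A, ∀ j ∈ s, projV (V j) x = projV (V j) a := by
          intro s
          induction s using Finset.induction with
          | empty => exact ⟨a0, ha0, by simp⟩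
          | @insert j s hj ih =>
            obtain ⟨x, hxA, hxs⟩ := ih
            obtain ⟨y, hyA, hyproj⟩ := haB j
            have hmp := path_proj hboxlim (hVcomp j) hA hAMlim (hA.2 x hxA y hyA) hxA
            rw [hyproj] at hmp
            obtain ⟨x', hrtg, hproj', hoff'⟩ :=
              path_lift hboxlim (hVcomp j) hmp x (hAMlim x hxA) rfl
            refine ⟨x', rtg_mem hA hrtg hxA, ?_⟩
            intro j' hj'
            rcases Finset.mem_insert.1 hj' with rfl | hj's
            · exact hproj'
            · rw [← hxs j' hj's]
              funext l
              have hlnot : l.1 ∉ V j := by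
                intro hmem
                have hne : V j' ≠ V j := fun h => hj (by rw [← hVinj h]; exact hj's)
                exact comp_disjoint (hVcomp j') (hVcomp j) hne l.2 hmem
              exact hoff' l.1 hlnot
        obtain ⟨x, hxA, hxall⟩ := main Finset.univ
        have hax : a = x := by
          funext i
          by_cases hiJ : i ∈ JSet Mlim
          · obtain ⟨W, hWc, hiW⟩ := comp_mem_self (f := f) hiJ
            obtain ⟨j, hjW⟩ := (hViff W).1 hWc
            have hiVj : i ∈ V j := by rw [hjW]; exact hiW
            have hproj := hxall j (Finset.mem_univ j)
            have := congrFun hproj ⟨i, hiVj⟩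
            exact (this : x i = a i).symm
          · have hcard : (Mlim i).card = 1 := by
              have h1 : ¬ 1 < (Mlim i).card := hiJ
              have h2 := Finset.Nonempty.card_pos (hneMlim i)
              omega
            obtain ⟨c, hc⟩ := Finset.card_eq_one.1 hcard
            have h1 := haM i
            have h2 := hAMlim x hxA i
            rw [hc] at h1 h2
            rw [Finset.mem_singleton.1 h1, Finset.mem_singleton.1 h2]
        rw [hax]; exact hxA

end DRN
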